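/- Let B := { x ∈ ℝ² : |x| < 1 } be the open unit ball with 2-dimensional Lebesgue measure, and define ρ : B → (0,∞) by ρ(x) := log(e/|x|) if x₁x₂ > 0, ρ(x) := 1/log(e/|x|) if x₁x₂ < 0, and ρ(x) := 1 if x₁x₂ = 0. Then for every p > 1, lim_{r→0⁺} ⨍_{B(0,r)} ρ dx = ∞ and lim_{r→0⁺} ⨍_{B(0,r)} ρ^{−1/(p−1)} dx = ∞, where ⨍_{B(0,r)} denotes the average with respect to Lebesgue measure over the ball B(0,r) ⊆ B (r < 1). In particular, for every p > 1, sup over open balls B' ⊆ B of ( ⨍_{B'} ρ dx )( ⨍_{B'} ρ^{−1/(p−1)} dx )^{p−1} = ∞, so ρ is not a Muckenhoupt A_p weight for any p > 1. -/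

import Mathlib

/-!
Write `ℓ(t) = log(e/t)`, so that `ρ = ℓ(|x|)` where `x₁x₂ > 0` and `ρ = 1/ℓ(|x|)` where
`x₁x₂ < 0`; hence `ρ^s = ℓ(|x|)^|s|` on the two quadrants where `s x₁x₂ > 0`. Such a quadrant
contains a ball of radius `r/8` inside `B(0,r)`, i.e. `1/64` of its area, on which
`ℓ(|x|) ≥ ℓ(r)`. Since `ρ^s ≥ 0` and `ρ^s ≤ C_s/|x|` is integrable near `0`, the average of `ρ^s`
over `B(0,r)` is at least `ℓ(r)^|s| / 64 → ∞` for every `s ≠ 0`; take `s = 1` and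
`s = -1/(p-1)`.
-/

open MeasureTheory Filter Topology
open scoped ENNReal NNReal

/-- Zhikov's weight on the unit ball of `ℝ²`: `ρ(x) = log(e/|x|)` if `x₁x₂ > 0`,
`ρ(x) = 1/log(e/|x|)` if `x₁x₂ < 0`, and `ρ(x) = 1` if `x₁x₂ = 0`. -/
noncomputable def zhikovWeight (x : EuclideanSpace ℝ (Fin 2)) : ℝ :=
  if 0 < x 0 * x 1 then Real.log (Real.exp 1 / ‖x‖)
  else if x 0 * x 1 < 0 then 1 / Real.log (Real.exp 1 / ‖x‖)
  else 1

open Metric Set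

noncomputable def logExpDiv (t : ℝ) : ℝ := Real.log (Real.exp 1 / t)

lemma logExpDiv_eq {t : ℝ} (ht : 0 < t) : logExpDiv t = 1 - Real.log t := by
  rw [logExpDiv, Real.log_div (Real.exp_ne_zero 1) ht.ne', Real.log_exp]

lemma one_le_logExpDiv {t : ℝ} (ht0 : 0 < t) (ht1 : t ≤ 1) : 1 ≤ logExpDiv t := by
  rw [logExpDiv_eq ht0]
  linarith [Real.log_nonpos ht0.le ht1]

lemma logExpDiv_le_logExpDiv {s t : ℝ} (hs : 0 < s) (hst : s ≤ t) :
    logExpDiv t ≤ logExpDiv s := by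
  rw [logExpDiv_eq hs, logExpDiv_eq (hs.trans_le hst)]
  linarith [Real.log_le_log hs hst]

lemma logExpDiv_pow_le {t : ℝ} (ht0 : 0 < t) (ht1 : t ≤ 1) (n : ℕ) :
    logExpDiv t ^ n ≤ n.factorial * Real.exp 1 * t⁻¹ := by
  have h := Real.pow_div_factorial_le_exp (logExpDiv t)
    (zero_le_one.trans (one_le_logExpDiv ht0 ht1)) n
  have hexp : Real.exp (logExpDiv t) = Real.exp 1 / t := Real.exp_log (by positivity)
  rw [div_le_iff₀ (by positivity), hexp] at h
  exact h.trans_eq (by ring)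

lemma tendsto_logExpDiv_nhdsGT_zero : Tendsto logExpDiv (𝓝[>] 0) atTop := by
  refine (tendsto_atTop_add_const_left _ 1
    (tendsto_neg_atBot_atTop.comp Real.tendsto_log_nhdsGT_zero)).congr' ?_
  filter_upwards [self_mem_nhdsWithin] with t ht
  rw [logExpDiv_eq ht]
  rfl

lemma mul_measureReal_div_le_setAverage {α : Type*} [MeasurableSpace α] {μ : Measure α}
    {S T : Set α} {f : α → ℝ} {c : ℝ} (hST : S ⊆ T) (hS : MeasurableSet S) (hT : μ T ≠ ∞)
    (hf : IntegrableOn f T μ) (hf0 : 0 ≤ᵐ[μ.restrict T] f) (hc : ∀ x ∈ S, c ≤ f x) :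
    c * (μ.real S / μ.real T) ≤ ⨍ x in T, f x ∂μ := by
  have hS_int : c * μ.real S ≤ ∫ x in S, f x ∂μ :=
    setIntegral_ge_of_const_le_real hS (measure_ne_top_of_subset hST hT) hc (hf.mono_set hST)
  have hST_int : ∫ x in S, f x ∂μ ≤ ∫ x in T, f x ∂μ :=
    setIntegral_mono_set hf hf0 hST.eventuallyLE
  rw [setAverage_eq, smul_eq_mul, ← mul_div_assoc, div_eq_inv_mul]
  exact mul_le_mul_of_nonneg_left (hS_int.trans hST_int) (inv_nonneg.2 measureReal_nonneg)

lemma measureReal_ball_div_measureReal_ball {E : Type*} [NormedAddCommGroup E]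
    [NormedSpace ℝ E] [FiniteDimensional ℝ E] [Nontrivial E] [MeasurableSpace E] [BorelSpace E]
    (μ : Measure E) [μ.IsAddHaarMeasure] (x y : E) {r s : ℝ} (hr : 0 < r) (hs : 0 ≤ s) :
    μ.real (ball x s) / μ.real (ball y r) = (s / r) ^ Module.finrank ℝ E := by
  have hB : μ.real (ball (0 : E) 1) ≠ 0 :=
    (ENNReal.toReal_pos (measure_ball_pos μ 0 one_pos).ne' measure_ball_lt_top.ne).ne'
  simp only [measureReal_def, Measure.addHaar_ball μ _ hs, Measure.addHaar_ball μ _ hr.le,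
    ENNReal.toReal_mul, ENNReal.toReal_ofReal (pow_nonneg hs _),
    ENNReal.toReal_ofReal (pow_nonneg hr.le _)]
  rw [← measureReal_def, div_pow]
  field_simp

local notation "ℝ²" => EuclideanSpace ℝ (Fin 2)

lemma zhikovWeight_of_pos {x : ℝ²} (h : 0 < x 0 * x 1) : zhikovWeight x = logExpDiv ‖x‖ :=
  if_pos h

lemma zhikovWeight_of_neg {x : ℝ²} (h : x 0 * x 1 < 0) :
    zhikovWeight x = (logExpDiv ‖x‖)⁻¹ := by
  rw [zhikovWeight, if_neg (lt_asymm h), if_pos h, one_div, logExpDiv]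

lemma zhikovWeight_of_eq_zero {x : ℝ²} (h : x 0 * x 1 = 0) : zhikovWeight x = 1 := by
  simp [zhikovWeight, h]

lemma measurable_zhikovWeight : Measurable zhikovWeight :=
  Measurable.ite (measurableSet_lt measurable_const (by fun_prop)) (by fun_prop)
    (Measurable.ite (measurableSet_lt (by fun_prop) measurable_const) (by fun_prop)
      measurable_const)

lemma zhikovWeight_pos {x : ℝ²} (hx1 : ‖x‖ ≤ 1) : 0 < zhikovWeight x := by
  have hL (h : x 0 * x 1 ≠ 0) : 0 < logExpDiv ‖x‖ :=
    zero_lt_one.trans_le (one_le_logExpDiv (norm_pos_iff.2 fun hx => h (by simp [hx])) hx1)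
  rcases lt_trichotomy (x 0 * x 1) 0 with h | h | h
  · rw [zhikovWeight_of_neg h]
    exact inv_pos.2 (hL h.ne)
  · rw [zhikovWeight_of_eq_zero h]
    exact one_pos
  · rw [zhikovWeight_of_pos h]
    exact hL h.ne'

lemma zhikovWeight_rpow_le {x : ℝ²} (hx0 : x ≠ 0) (hx1 : ‖x‖ ≤ 1) (s : ℝ) :
    zhikovWeight x ^ s ≤ logExpDiv ‖x‖ ^ |s| := by
  have hL := one_le_logExpDiv (norm_pos_iff.2 hx0) hx1
  rcases lt_trichotomy (x 0 * x 1) 0 with h | h | h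
  · rw [zhikovWeight_of_neg h, Real.inv_rpow (by linarith), ← Real.rpow_neg (by linarith)]
    exact Real.rpow_le_rpow_of_exponent_le hL (neg_le_abs s)
  · rw [zhikovWeight_of_eq_zero h, Real.one_rpow]
    exact Real.one_le_rpow hL (abs_nonneg s)
  · rw [zhikovWeight_of_pos h]
    exact Real.rpow_le_rpow_of_exponent_le hL (le_abs_self s)

lemma zhikovWeight_rpow_eq_of_pos {x : ℝ²} {s : ℝ} (hx1 : ‖x‖ ≤ 1)
    (h : 0 < s * (x 0 * x 1)) :
    zhikovWeight x ^ s = logExpDiv ‖x‖ ^ |s| := by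
  rcases lt_or_gt_of_ne (left_ne_zero_of_mul h.ne') with hs | hs
  · have hL : 0 ≤ logExpDiv ‖x‖ :=
      zero_le_one.trans (one_le_logExpDiv (norm_pos_iff.2 fun hx => by simp [hx] at h) hx1)
    rw [zhikovWeight_of_neg (neg_of_mul_pos_right h hs.le), abs_of_neg hs, Real.inv_rpow hL,
      ← Real.rpow_neg hL]
  · rw [zhikovWeight_of_pos (pos_of_mul_pos_right h hs.le), abs_of_pos hs]

-- Without integrability the set averages below would be junk zeros.
lemma integrableOn_zhikovWeight_rpow (s : ℝ) :
    IntegrableOn (fun x => zhikovWeight x ^ s) (ball (0 : ℝ²) 1) := by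
  refine integrableOn_ball_of_norm_le_rpow (C := (⌈|s|⌉₊).factorial * Real.exp 1) (α := 1)
    (by simp) (by simp) ?_ (measurable_zhikovWeight.pow_const s).aestronglyMeasurable
  filter_upwards [ae_restrict_mem measurableSet_ball, ae_restrict_of_ae (volume.ae_ne 0)]
    with x hx hx0
  have hx1 : ‖x‖ ≤ 1 := (mem_ball_zero_iff.1 hx).le
  have hn := norm_pos_iff.2 hx0
  rw [Real.norm_of_nonneg (Real.rpow_nonneg (zhikovWeight_pos hx1).le s), Real.rpow_neg_one]
  calc zhikovWeight x ^ s ≤ logExpDiv ‖x‖ ^ |s| := zhikovWeight_rpow_le hx0 hx1 s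
    _ ≤ logExpDiv ‖x‖ ^ (⌈|s|⌉₊ : ℝ) :=
      Real.rpow_le_rpow_of_exponent_le (one_le_logExpDiv hn hx1) (Nat.le_ceil _)
    _ = logExpDiv ‖x‖ ^ ⌈|s|⌉₊ := Real.rpow_natCast _ _
    _ ≤ _ := logExpDiv_pow_le hn hx1 _

lemma norm_quadrantCenter_le {r σ : ℝ} (hr : 0 ≤ r) (hσ : |σ| = 1) :
    ‖!₂[r / 4, σ * (r / 4)]‖ ≤ r / 2 := by
  have hσ2 : σ ^ 2 = 1 := by rw [← sq_abs, hσ, one_pow]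
  rw [EuclideanSpace.norm_eq, Real.sqrt_le_left (by positivity)]
  simp only [Fin.sum_univ_two, Real.norm_eq_abs, sq_abs]
  simp only [Fin.isValue, Matrix.cons_val_zero, Matrix.cons_val_one, Matrix.cons_val_fin_one]
  nlinarith

lemma ball_quadrantCenter_subset {r σ : ℝ} (hr : 0 ≤ r) (hσ : |σ| = 1) :
    ball !₂[r / 4, σ * (r / 4)] (r / 8) ⊆ ball (0 : ℝ²) r := by
  refine ball_subset_ball' ?_
  rw [dist_zero_right]
  linarith [norm_quadrantCenter_le hr hσ]

lemma mul_apply_pos_of_mem_ball_quadrantCenter {r σ : ℝ} (hσ : |σ| = 1) {y : ℝ²}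
    (hy : y ∈ ball !₂[r / 4, σ * (r / 4)] (r / 8)) : 0 < σ * (y 0 * y 1) := by
  have hcoord (i : Fin 2) : |y i - !₂[r / 4, σ * (r / 4)] i| < r / 8 :=
    (PiLp.norm_apply_le (y - _) i).trans_lt (mem_ball_iff_norm.1 hy)
  have h0 := hcoord 0
  have h1 := hcoord 1
  simp only [Fin.isValue, Matrix.cons_val_zero, Matrix.cons_val_one,
    Matrix.cons_val_fin_one] at h0 h1
  have hσ2 : σ ^ 2 = 1 := by rw [← sq_abs, hσ, one_pow]
  rw [show y 1 - σ * (r / 4) = σ * (σ * y 1 - r / 4) by linear_combination (-y 1) * hσ2,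
    abs_mul, hσ, one_mul] at h1
  obtain ⟨h0l, h0r⟩ := abs_lt.1 h0
  obtain ⟨h1l, h1r⟩ := abs_lt.1 h1
  calc 0 < y 0 * (σ * y 1) := mul_pos (by linarith) (by linarith)
    _ = σ * (y 0 * y 1) := by ring

lemma logExpDiv_rpow_div_le_setAverage {s r : ℝ} (hs : s ≠ 0) (hr0 : 0 < r) (hr1 : r ≤ 1) :
    logExpDiv r ^ |s| / 64 ≤ ⨍ x in ball (0 : ℝ²) r, zhikovWeight x ^ s := by
  set σ := s / |s|
  have hσ : |σ| = 1 := by rw [abs_div, abs_abs, div_self (abs_ne_zero.2 hs)]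
  have hsub := ball_quadrantCenter_subset hr0.le hσ
  have hbound (y : ℝ²) (hy : y ∈ ball !₂[r / 4, σ * (r / 4)] (r / 8)) :
      logExpDiv r ^ |s| ≤ zhikovWeight y ^ s := by
    have hyr : ‖y‖ < r := mem_ball_zero_iff.1 (hsub hy)
    have hsy : 0 < s * (y 0 * y 1) := by
      have h := mul_pos (abs_pos.2 hs) (mul_apply_pos_of_mem_ball_quadrantCenter hσ hy)
      rwa [← mul_assoc, mul_div_cancel₀ s (abs_ne_zero.2 hs)] at h
    have hy0 : 0 < ‖y‖ := norm_pos_iff.2 fun hy => by simp [hy] at hsy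
    rw [zhikovWeight_rpow_eq_of_pos (hyr.le.trans hr1) hsy]
    exact Real.rpow_le_rpow (zero_le_one.trans (one_le_logExpDiv hr0 hr1))
      (logExpDiv_le_logExpDiv hy0 hyr.le) (abs_nonneg s)
  have hnonneg : 0 ≤ᵐ[volume.restrict (ball (0 : ℝ²) r)] fun x => zhikovWeight x ^ s := by
    filter_upwards [ae_restrict_mem measurableSet_ball] with x hx
    exact Real.rpow_nonneg (zhikovWeight_pos ((mem_ball_zero_iff.1 hx).le.trans hr1)).le s
  have h := mul_measureReal_div_le_setAverage hsub measurableSet_ball measure_ball_lt_top.ne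
    ((integrableOn_zhikovWeight_rpow s).mono_set (ball_subset_ball hr1)) hnonneg hbound
  rw [measureReal_ball_div_measureReal_ball volume _ _ hr0 (by positivity),
    finrank_euclideanSpace_fin] at h
  convert h using 1
  field_simp
  norm_num

lemma tendsto_setAverage_zhikovWeight_rpow {s : ℝ} (hs : s ≠ 0) :
    Tendsto (fun r => ⨍ x in ball (0 : ℝ²) r, zhikovWeight x ^ s) (𝓝[>] 0) atTop := by
  refine tendsto_atTop_mono' _ ?_ (((tendsto_rpow_atTop (abs_pos.2 hs)).comp
    tendsto_logExpDiv_nhdsGT_zero).atTop_div_const (by norm_num : (0 : ℝ) < 64))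
  filter_upwards [Ioo_mem_nhdsGT one_pos] with r hr
  exact logExpDiv_rpow_div_le_setAverage hs hr.1 hr.2.le

/-- For Zhikov's weight `ρ` on the unit ball `B ⊆ ℝ²` and every `p > 1`,
the averages of `ρ` and of `ρ^{−1/(p−1)}` over `B(0,r)` tend to `∞` as `r → 0⁺`; in
particular, for every `p > 1` the Muckenhoupt `A_p` quantity over balls contained in `B` is
unbounded, so `ρ` is not an `A_p` weight for any `p > 1`. -/
theorem stmt16 :
    (∀ p : ℝ, 1 < p →
      Filter.Tendsto
        (fun r : ℝ =>
          ⨍ x in Metric.ball (0 : EuclideanSpace ℝ (Fin 2)) r, zhikovWeight x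
            ∂MeasureTheory.volume)
        (nhdsWithin 0 (Set.Ioi 0)) Filter.atTop ∧
      Filter.Tendsto
        (fun r : ℝ =>
          ⨍ x in Metric.ball (0 : EuclideanSpace ℝ (Fin 2)) r,
            zhikovWeight x ^ (-1 / (p - 1)) ∂MeasureTheory.volume)
        (nhdsWithin 0 (Set.Ioi 0)) Filter.atTop) ∧
    (∀ p : ℝ, 1 < p → ∀ K : ℝ,
      ∃ (z : EuclideanSpace ℝ (Fin 2)) (s : ℝ), 0 < s ∧
        Metric.ball z s ⊆ Metric.ball (0 : EuclideanSpace ℝ (Fin 2)) 1 ∧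
        K < (⨍ x in Metric.ball z s, zhikovWeight x ∂MeasureTheory.volume) *
          (⨍ x in Metric.ball z s, zhikovWeight x ^ (-1 / (p - 1))
            ∂MeasureTheory.volume) ^ (p - 1)) := by
  have hρ : Tendsto (fun r => ⨍ x in ball (0 : ℝ²) r, zhikovWeight x) (𝓝[>] 0) atTop := by
    simpa only [Real.rpow_one] using tendsto_setAverage_zhikovWeight_rpow one_ne_zero
  have hρ' (p : ℝ) (hp : 1 < p) : Tendsto
      (fun r => ⨍ x in ball (0 : ℝ²) r, zhikovWeight x ^ (-1 / (p - 1))) (𝓝[>] 0) atTop :=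
    tendsto_setAverage_zhikovWeight_rpow (div_ne_zero (by norm_num) (sub_ne_zero.2 hp.ne'))
  refine ⟨fun p hp => ⟨hρ, hρ' p hp⟩, fun p hp K => ?_⟩
  have hAp := hρ.atTop_mul_atTop₀ ((tendsto_rpow_atTop (sub_pos.2 hp)).comp (hρ' p hp))
  obtain ⟨r, hK, hr⟩ := ((hAp.eventually_gt_atTop K).and (Ioo_mem_nhdsGT one_pos)).exists
  exact ⟨0, r, hr.1, ball_subset_ball hr.2.le, hK⟩
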